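/- arXiv:2405.16131 — 5 statements merged into one kernel-verified Lean document; each statement's English description precedes it below -/
import Mathlib

section
/- Let D be a PID, p ∈ D a prime with finite residue field of cardinality q, and let a_1,…,a_q ∈ D be a complete system of residues modulo p. For N ≥ 2 define g_i = (x−a_i)^(N−1) for 1 ≤ i < q and g_q = (x−a_q)^N. Then for every c ∈ D, v_p(g_1(c)···g_q(c)) ≥ N−1, and there exists c ∈ D with v_p(g_1(c)···g_q(c)) = N−1. -/
open Polynomial

/-!
Every `c` is congruent mod `p` to some `a i`, and that factor alone contributes `p ^ (N - 1)`.
For `c = a i₀ + p` with `i₀` not the last index, the factor at `i₀` is exactly `p ^ (N - 1)`,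
while every other factor `(a i₀ + p - a i) ^ e` is prime to `p` because the `a i` are pairwise
incongruent.
-/

section ResidueSystem

variable {D : Type*} [CommRing D] {p : D} {ι : Type*} {a : ι → D}

theorem Ideal.Quotient.mk_span_singleton_eq_iff_dvd_sub {x y : D} :
    Ideal.Quotient.mk (Ideal.span {p}) x = Ideal.Quotient.mk (Ideal.span {p}) y ↔ p ∣ x - y := by
  rw [Ideal.Quotient.eq, Ideal.mem_span_singleton]

theorem pow_dvd_prod_sub_pow_of_surjective [Fintype ι]
    (ha : Function.Surjective fun i => Ideal.Quotient.mk (Ideal.span {p}) (a i))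
    {e : ι → ℕ} {m : ℕ} (he : ∀ i, m ≤ e i) (c : D) :
    p ^ m ∣ ∏ i, (c - a i) ^ e i := by
  obtain ⟨i, hi⟩ := ha (Ideal.Quotient.mk _ c)
  have hpi : p ∣ c - a i := Ideal.Quotient.mk_span_singleton_eq_iff_dvd_sub.mp hi.symm
  exact ((pow_dvd_pow_of_dvd hpi m).trans (pow_dvd_pow _ (he i))).trans
    (Finset.dvd_prod_of_mem _ (Finset.mem_univ i))

theorem not_dvd_add_sub_of_injective
    (ha : Function.Injective fun i => Ideal.Quotient.mk (Ideal.span {p}) (a i))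
    {i j : ι} (hij : i ≠ j) : ¬ p ∣ a i + p - a j := by
  intro h
  have hp : p ∣ a i - a j := by
    simpa only [sub_right_comm, add_sub_cancel_right] using dvd_sub h (dvd_refl p)
  exact hij.symm (ha (Ideal.Quotient.mk_span_singleton_eq_iff_dvd_sub.mpr hp).symm)

theorem not_pow_succ_dvd_prod_add_sub_pow_of_injective [IsDomain D] [Fintype ι] [DecidableEq ι]
    (hp : Prime p) (ha : Function.Injective fun i => Ideal.Quotient.mk (Ideal.span {p}) (a i))
    (e : ι → ℕ) (i₀ : ι) :
    ¬ p ^ (e i₀ + 1) ∣ ∏ i, (a i₀ + p - a i) ^ e i := by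
  have hrest : ¬ p ∣ ∏ i ∈ Finset.univ.erase i₀, (a i₀ + p - a i) ^ e i := by
    rw [hp.dvd_finsetProd_iff]
    rintro ⟨i, hi, hdvd⟩
    exact not_dvd_add_sub_of_injective ha (Finset.ne_of_mem_erase hi).symm
      (hp.dvd_of_dvd_pow hdvd)
  rw [← Finset.mul_prod_erase _ _ (Finset.mem_univ i₀), add_sub_cancel_left, pow_succ]
  exact fun h => hrest ((mul_dvd_mul_iff_left (pow_ne_zero _ hp.ne_zero)).mp h)

end ResidueSystem

theorem stmt5_general (D : Type*) [CommRing D] [IsDomain D]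
    (p : D) (hp : Prime p)
    (q : ℕ)
    (a : Fin q → D)
    (ha : Function.Bijective fun i => Ideal.Quotient.mk (Ideal.span {p}) (a i))
    (N : ℕ) (hN : 2 ≤ N) :
    (∀ c : D, p ^ (N - 1) ∣
        ∏ i : Fin q, ((X - C (a i)) ^ (if (i : ℕ) + 1 = q then N else N - 1)).eval c) ∧
    (∃ c : D, p ^ (N - 1) ∣
        (∏ i : Fin q, ((X - C (a i)) ^ (if (i : ℕ) + 1 = q then N else N - 1)).eval c) ∧
      ¬ p ^ N ∣
        ∏ i : Fin q, ((X - C (a i)) ^ (if (i : ℕ) + 1 = q then N else N - 1)).eval c) := by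
  have : Nontrivial (D ⧸ Ideal.span {p}) := Ideal.Quotient.nontrivial_iff.mpr
    (by simpa only [ne_eq, Ideal.span_singleton_eq_top] using hp.not_isUnit)
  have : Nontrivial (Fin q) := ha.surjective.nontrivial
  have hq : 2 ≤ q := Fin.nontrivial_iff_two_le.mp this
  let e : Fin q → ℕ := fun i => if (i : ℕ) + 1 = q then N else N - 1
  have he : ∀ i, N - 1 ≤ e i := fun i => by simp only [e]; split_ifs <;> omega
  let i₀ : Fin q := ⟨0, by omega⟩
  have he₀ : e i₀ + 1 = N := by simp only [e, i₀]; split_ifs <;> omega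
  simp only [eval_pow, eval_sub, eval_X, eval_C]
  refine ⟨pow_dvd_prod_sub_pow_of_surjective ha.surjective he, a i₀ + p,
    pow_dvd_prod_sub_pow_of_surjective ha.surjective he _, ?_⟩
  simpa only [he₀] using not_pow_succ_dvd_prod_add_sub_pow_of_injective hp ha.injective e i₀

/-- For a complete residue system `a_1, …, a_q` modulo a prime `p` with
`q = |D/pD|` finite, and `g_i = (x-a_i)^(N-1)` for `i < q`, `g_q = (x-a_q)^N`,
every value of the product `g_1 ⋯ g_q` has `v_p ≥ N-1`, and some value has
`v_p = N-1` exactly. -/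
theorem stmt5 (D : Type*) [CommRing D] [IsDomain D] [IsPrincipalIdealRing D]
    (p : D) (hp : Prime p) (hfin : Finite (D ⧸ Ideal.span {p}))
    (q : ℕ) (hq : q = Nat.card (D ⧸ Ideal.span {p}))
    (a : Fin q → D)
    (ha : Function.Bijective fun i => Ideal.Quotient.mk (Ideal.span {p}) (a i))
    (N : ℕ) (hN : 2 ≤ N) :
    (∀ c : D, p ^ (N - 1) ∣
        ∏ i : Fin q, ((X - C (a i)) ^ (if (i : ℕ) + 1 = q then N else N - 1)).eval c) ∧
    (∃ c : D, p ^ (N - 1) ∣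
        (∏ i : Fin q, ((X - C (a i)) ^ (if (i : ℕ) + 1 = q then N else N - 1)).eval c) ∧
      ¬ p ^ N ∣
        ∏ i : Fin q, ((X - C (a i)) ^ (if (i : ℕ) + 1 = q then N else N - 1)).eval c) :=
  stmt5_general D p hp q a ha N hN
end

section
/- Let D be a PID, p a prime with residue field of size q, a_1,…,a_q a complete residue system mod p such that every a_i ≡ 0 mod Q for all prime ideals Q ≠ (p) of norm at most q, let N ≥ 2, g_i = (x−a_i)^(N−1) for i < q and g_q = (x−a_q)^N. Then the fixed divisor of the product g_1···g_q equals (p^(N−1)), i.e., p^(N−1) divides g_1(c)···g_q(c) for all c ∈ D, and p^(N−1) generates the ideal generated by all such values. -/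
open Polynomial

/-- With the complete residue system `a_1, …, a_q` mod `p` additionally
satisfying `a_i ∈ Q` for every prime ideal `Q ≠ (p)` of finite norm `≤ q`, the fixed
divisor of `g_1 ⋯ g_q` (ideal generated by its values) equals `(p^(N-1))`. -/
theorem stmt6 (D : Type*) [CommRing D] [IsDomain D] [IsPrincipalIdealRing D]
    (p : D) (hp : Prime p) (hfin : Finite (D ⧸ Ideal.span {p}))
    (q : ℕ) (hq : q = Nat.card (D ⧸ Ideal.span {p}))
    (a : Fin q → D)
    (ha : Function.Bijective fun i => Ideal.Quotient.mk (Ideal.span {p}) (a i))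
    (haQ : ∀ Q : Ideal D, Q.IsPrime → Q ≠ Ideal.span {p} →
      (Finite (D ⧸ Q) ∧ Nat.card (D ⧸ Q) ≤ q) → ∀ i : Fin q, a i ∈ Q)
    (N : ℕ) (hN : 2 ≤ N) :
    Ideal.span (Set.range fun c : D =>
        ∏ i : Fin q, ((X - C (a i)) ^ (if (i : ℕ) + 1 = q then N else N - 1)).eval c)
      = Ideal.span {p ^ (N - 1)} := by
  classical
  haveI := hfin
  have hp0 : p ≠ 0 := hp.ne_zero
  set E : Fin q → ℕ := fun i => if (i : ℕ) + 1 = q then N else N - 1 with hE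
  have hE1 : ∀ i, 1 ≤ E i := by intro i; simp only [hE]; split <;> omega
  have hENm1 : ∀ i, N - 1 ≤ E i := by intro i; simp only [hE]; split <;> omega
  have hfun : (fun c : D =>
      ∏ i : Fin q, ((X - C (a i)) ^ (if (i : ℕ) + 1 = q then N else N - 1)).eval c)
      = fun c : D => ∏ i : Fin q, (c - a i) ^ E i := by
    funext c
    refine Finset.prod_congr rfl fun x _ => ?_
    simp only [hE]; split <;> simp
  rw [hfun]
  -- q ≥ 2
  have hPtop : Ideal.span {p} ≠ ⊤ := by
    simpa [Ideal.span_singleton_eq_top] using hp.not_unit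
  haveI : Nontrivial (D ⧸ Ideal.span {p}) := Ideal.Quotient.nontrivial_iff.mpr hPtop
  have hq2 : 2 ≤ q := by
    rw [hq]; exact Finite.one_lt_card_iff_nontrivial.mpr this
  set i0 : Fin q := ⟨0, by omega⟩ with hi0
  have hE0 : E i0 = N - 1 := by simp only [hE, hi0]; split <;> omega
  -- mod-p divisibility of all values
  have pdvd : ∀ c : D, p ^ (N - 1) ∣ ∏ i : Fin q, (c - a i) ^ E i := by
    intro c
    obtain ⟨j, hj⟩ := ha.2 (Ideal.Quotient.mk _ c)
    have hdj : p ∣ c - a j := by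
      rw [← Ideal.mem_span_singleton]
      have := Ideal.Quotient.eq.mp hj
      simpa [neg_sub] using (Ideal.span {p}).neg_mem this
    exact dvd_trans (dvd_trans (pow_dvd_pow_of_dvd hdj _) (pow_dvd_pow _ (hENm1 j)))
      (Finset.dvd_prod_of_mem _ (Finset.mem_univ j))
  set I : Ideal D := Ideal.span (Set.range fun c : D => ∏ i : Fin q, (c - a i) ^ E i) with hI
  obtain ⟨d, hd⟩ := (IsPrincipalIdealRing.principal I).principal
  have hd' : I = Ideal.span {d} := hd
  have hdvd_all : ∀ c : D, d ∣ ∏ i : Fin q, (c - a i) ^ E i := by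
    intro c
    rw [← Ideal.mem_span_singleton, ← hd']
    exact Ideal.subset_span ⟨c, rfl⟩
  have hIle : I ≤ Ideal.span {p ^ (N - 1)} := by
    rw [Ideal.span_le]
    rintro _ ⟨c, rfl⟩
    exact Ideal.mem_span_singleton.mpr (pdvd c)
  have hpd : p ^ (N - 1) ∣ d := by
    rw [← Ideal.mem_span_singleton]
    exact hIle (hd' ▸ Ideal.mem_span_singleton_self d)
  obtain ⟨e, he⟩ := hpd
  -- the special value at a i0 + p
  set m : D := ∏ i ∈ Finset.univ.erase i0, (a i0 + p - a i) ^ E i with hm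
  have hv0 : (∏ i : Fin q, (a i0 + p - a i) ^ E i) = p ^ (N - 1) * m := by
    rw [← Finset.mul_prod_erase Finset.univ _ (Finset.mem_univ i0)]
    congr 1
    rw [add_sub_cancel_left, hE0]
  have hfac : ∀ i : Fin q, i ≠ i0 → ¬ p ∣ (a i0 + p - a i) := by
    intro i hi hdvd
    have : p ∣ a i0 - a i := by
      have : a i0 - a i = (a i0 + p - a i) - p := by ring
      rw [this]; exact dvd_sub hdvd dvd_rfl
    have : (Ideal.Quotient.mk (Ideal.span {p}) (a i0)) = Ideal.Quotient.mk _ (a i) :=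
      Ideal.Quotient.eq.mpr (Ideal.mem_span_singleton.mpr this)
    exact hi (ha.1 this).symm
  have hpm : ¬ p ∣ m := by
    intro hdvd
    obtain ⟨i, himem, hdvd'⟩ := hp.exists_mem_finset_dvd hdvd
    have := hp.dvd_of_dvd_pow hdvd'
    exact hfac i (Finset.ne_of_mem_erase himem) this
  have hm0 : m ≠ 0 := by
    rw [hm]
    apply Finset.prod_ne_zero_iff.mpr
    intro i hi
    apply pow_ne_zero
    intro h0
    exact hfac i (Finset.ne_of_mem_erase hi) (h0 ▸ dvd_zero p)
  have hem : e ∣ m := by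
    have h1 : p ^ (N - 1) * e ∣ p ^ (N - 1) * m := by
      rw [← he, ← hv0]; exact hdvd_all _
    exact (mul_dvd_mul_iff_left (pow_ne_zero _ hp0)).mp h1
  -- e is a unit
  have hunit : IsUnit e := by
    by_contra hne
    have he0 : e ≠ 0 := fun h => hm0 (by simpa [h] using hem)
    obtain ⟨r, hirr, hre⟩ := WfDvdMonoid.exists_irreducible_factor hne he0
    have hr : Prime r := hirr.prime
    have hrd : r ∣ d := he ▸ hre.trans (Dvd.intro_left _ rfl)
    have hr_all : ∀ c : D, r ∣ ∏ i : Fin q, (c - a i) ^ E i :=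
      fun c => hrd.trans (hdvd_all c)
    set Q : Ideal D := Ideal.span {r} with hQ
    have hQprime : Q.IsPrime := (Ideal.span_singleton_prime hr.ne_zero).mpr hr
    have hrm : r ∣ m := hre.trans hem
    have hQne : Q ≠ Ideal.span {p} := by
      intro heq
      have : p ∣ r := by
        rw [← Ideal.mem_span_singleton, ← heq]
        exact Ideal.mem_span_singleton_self r
      exact hpm (this.trans hrm)
    by_cases hsurj : Function.Surjective (fun i : Fin q => Ideal.Quotient.mk Q (a i))
    · haveI hQfin : Finite (D ⧸ Q) := Finite.of_surjective _ hsurj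
      have hcard : Nat.card (D ⧸ Q) ≤ q := by
        have := Nat.card_le_card_of_surjective _ hsurj
        simpa using this
      have hmemQ := haQ Q hQprime hQne ⟨hQfin, hcard⟩
      obtain ⟨i, _, hdvd'⟩ := hr.exists_mem_finset_dvd (hr_all 1)
      have h1 : (1 : D) - a i ∈ Q :=
        Ideal.mem_span_singleton.mpr (hr.dvd_of_dvd_pow hdvd')
      have : (1 : D) ∈ Q := by
        have := Q.add_mem h1 (hmemQ i)
        simpa using this
      exact hQprime.ne_top ((Ideal.eq_top_iff_one Q).mpr this)
    · rw [Function.Surjective] at hsurj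
      push_neg at hsurj
      obtain ⟨y, hy⟩ := hsurj
      obtain ⟨c, rfl⟩ := Ideal.Quotient.mk_surjective y
      obtain ⟨i, _, hdvd'⟩ := hr.exists_mem_finset_dvd (hr_all c)
      have h1 : c - a i ∈ Q := Ideal.mem_span_singleton.mpr (hr.dvd_of_dvd_pow hdvd')
      exact hy i (Ideal.Quotient.eq.mpr (by simpa [neg_sub] using Q.neg_mem h1))
  -- conclude
  have hdp : d ∣ p ^ (N - 1) := by
    obtain ⟨u, rfl⟩ := hunit
    exact he ▸ ⟨(u⁻¹ : Dˣ), by simp [mul_assoc]⟩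
  have hpd : p ^ (N - 1) ∣ d := ⟨e, he⟩
  rw [hI] at hd' ⊢
  rw [hd']
  exact Ideal.span_singleton_eq_span_singleton.mpr (associated_of_dvd_dvd hdp hpd)
end

section
/- Let D be a Dedekind domain with infinitely many maximal ideals and quotient field K. Given monic non-constant polynomials g_1,…,g_q ∈ D[x] with total degree d = Σ deg(g_i), and any m ∈ ℕ, there exist monic polynomials f_1,…,f_q ∈ D[x] such that: deg(f_i) = deg(g_i) for all i; the f_i are pairwise non-associated and irreducible in K[x]; and f_i ≡ g_i mod P^(m+1)D[x] for every maximal ideal P of D with |D/P| ≤ d. -/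
open Polynomial

section Aux

variable {D : Type*} [CommRing D] [IsDomain D] [IsDedekindDomain D]

/-- Any nonzero element of a Dedekind domain lies in only finitely many ideals. -/
lemma aux_finite_mem {z : D} (hz : z ≠ 0) : {P : Ideal D | z ∈ P}.Finite := by
  have hspan : Ideal.span {z} ≠ 0 := by
    simpa only [Ne, Ideal.zero_eq_bot, Ideal.span_singleton_eq_bot] using hz
  haveI := UniqueFactorizationMonoid.fintypeSubtypeDvd (Ideal.span {z}) hspan
  rw [← Set.finite_coe_iff]
  exact Finite.of_injective
    (fun P : {P : Ideal D | z ∈ P} =>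
      (⟨P.1, Ideal.dvd_iff_le.mpr ((Ideal.span_singleton_le_iff_mem _).mpr P.2)⟩ :
        {J : Ideal D // J ∣ Ideal.span {z}}))
    (fun P P' h => by simpa [Subtype.ext_iff] using h)

end Aux

/-- Over a Dedekind domain with infinitely many maximal ideals, monic
non-constant `g_1, …, g_q` can be replaced by monic `f_1, …, f_q` of the same degrees,
pairwise non-associated and irreducible in `K[x]`, with `f_i ≡ g_i mod P^(m+1) D[x]`
for every maximal ideal `P` of finite norm `≤ d = Σ deg g_i`. -/
theorem stmt7 (D K : Type*) [CommRing D] [IsDomain D] [IsDedekindDomain D]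
    [Field K] [Algebra D K] [IsFractionRing D K]
    (hinf : Infinite {P : Ideal D // P.IsMaximal})
    (q : ℕ) (g : Fin q → Polynomial D)
    (hmonic : ∀ i, (g i).Monic) (hnc : ∀ i, 0 < (g i).natDegree)
    (m : ℕ) :
    ∃ f : Fin q → Polynomial D,
      (∀ i, (f i).Monic) ∧
      (∀ i, (f i).natDegree = (g i).natDegree) ∧
      (∀ i, Irreducible ((f i).map (algebraMap D K))) ∧
      (∀ i j, i ≠ j →
        ¬ Associated ((f i).map (algebraMap D K)) ((f j).map (algebraMap D K))) ∧
      (∀ P : Ideal D, P.IsMaximal → Finite (D ⧸ P) →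
        Nat.card (D ⧸ P) ≤ ∑ i : Fin q, (g i).natDegree →
        ∀ i k, (f i - g i).coeff k ∈ P ^ (m + 1)) := by
  classical
  set d := ∑ i : Fin q, (g i).natDegree with hd
  set M := Nat.factorial d with hMdef
  have hM1 : 1 ≤ M := Nat.one_le_iff_ne_zero.mpr (Nat.factorial_ne_zero d)
  -- D is infinite
  haveI hDinf : Infinite D := by
    by_contra hfin
    rw [not_infinite_iff_finite] at hfin
    have hfield := Finite.isField_of_domain D
    letI : Field D := hfield.toField
    obtain ⟨P, P', hPP'⟩ := exists_pair_ne {P : Ideal D // P.IsMaximal}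
    have h1 : P.1 = ⊥ := (P.1.eq_bot_or_top).resolve_right P.2.ne_top
    have h2 : P'.1 = ⊥ := (P'.1.eq_bot_or_top).resolve_right P'.2.ne_top
    exact hPP' (Subtype.ext (h1.trans h2.symm))
  -- choose `a` with `z = a^(M+1) - a ≠ 0`
  have hpne : (X ^ (M + 1) - X : Polynomial D) ≠ 0 := by
    have h1 : ((X : Polynomial D) ^ (M + 1) - X).coeff (M + 1) = 1 := by
      rw [Polynomial.coeff_sub, Polynomial.coeff_X_pow, if_pos rfl, Polynomial.coeff_X,
        if_neg (by omega), sub_zero]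
    intro h
    rw [h, Polynomial.coeff_zero] at h1
    exact zero_ne_one h1
  obtain ⟨a, ha⟩ := ((Set.infinite_univ (α := D)).diff
    (Polynomial.finite_setOf_isRoot hpne)).nonempty
  have haroot : ¬ (X ^ (M + 1) - X : Polynomial D).IsRoot a := ha.2
  set z : D := a ^ (M + 1) - a with hzdef
  have hz : z ≠ 0 := by
    intro h
    apply haroot
    simp only [Polynomial.IsRoot.def, Polynomial.eval_sub, Polynomial.eval_pow,
      Polynomial.eval_X]
    rw [← hzdef]
    exact h
  -- z lies in every small prime
  have hz_small : ∀ P : Ideal D, P.IsMaximal → Finite (D ⧸ P) →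
      Nat.card (D ⧸ P) ≤ d → z ∈ P := by
    intro P hP hfin hcard
    haveI := hP
    letI : Field (D ⧸ P) := Ideal.Quotient.field P
    letI : Fintype (D ⧸ P) := Fintype.ofFinite _
    have hs2 : 2 ≤ Fintype.card (D ⧸ P) := Fintype.one_lt_card
    have hsd : Fintype.card (D ⧸ P) ≤ d := by rwa [Nat.card_eq_fintype_card] at hcard
    have hdvd : (Fintype.card (D ⧸ P) - 1) ∣ M :=
      Nat.dvd_factorial (by omega) (by omega)
    rw [← Ideal.Quotient.eq_zero_iff_mem]
    have hmk : (Ideal.Quotient.mk P) z =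
        (Ideal.Quotient.mk P a) ^ (M + 1) - Ideal.Quotient.mk P a := by
      simp [hzdef]
    set x := Ideal.Quotient.mk P a with hx
    by_cases hx0 : x = 0
    · rw [hmk, hx0, zero_pow (by omega), sub_zero]
    · obtain ⟨t, ht⟩ := hdvd
      have h1 : x ^ (Fintype.card (D ⧸ P) - 1) = 1 :=
        FiniteField.pow_card_sub_one_eq_one x hx0
      have hxM : x ^ M = 1 := by rw [ht, pow_mul, h1, one_pow]
      rw [hmk, pow_succ, hxM, one_mul, sub_self]
  -- choose q distinct "large" maximal ideals avoiding z and ⊥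
  have hallinf : {P : Ideal D | P.IsMaximal}.Infinite := Set.infinite_coe_iff.mp hinf
  have hgoodinf : ({P : Ideal D | P.IsMaximal} \ ({P : Ideal D | z ∈ P} ∪ {⊥})).Infinite :=
    hallinf.diff ((aux_finite_mem hz).union (Set.finite_singleton ⊥))
  haveI := hgoodinf.to_subtype
  let E : Fin q ↪ ↥({P : Ideal D | P.IsMaximal} \ ({P : Ideal D | z ∈ P} ∪ {⊥})) :=
    Fin.valEmbedding.trans (Infinite.natEmbedding _)
  set Q : Fin q → Ideal D := fun i => (E i).1 with hQdef
  have hQmax : ∀ i, (Q i).IsMaximal := fun i => (E i).2.1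
  have hQz : ∀ i, z ∉ Q i := fun i hzi => (E i).2.2 (Or.inl hzi)
  have hQbot : ∀ i, Q i ≠ ⊥ := fun i hb => (E i).2.2 (Or.inr hb)
  have hQinj : ∀ i j, i ≠ j → Q i ≠ Q j := by
    intro i j hij h
    exact hij (E.injective (Subtype.ext h))
  -- uniformizers
  have hπ : ∀ i, ∃ π : D, π ∈ Q i ∧ π ∉ (Q i) ^ 2 := by
    intro i
    haveI := (hQmax i).isPrime
    have h2 := Ideal.pow_succ_lt_pow (hQbot i) 1
    rw [pow_one] at h2
    obtain ⟨π, hπ1, hπ2⟩ := SetLike.exists_of_lt h2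
    exact ⟨π, hπ1, hπ2⟩
  choose π hπ1 hπ2 using hπ
  set W : Ideal D := (Ideal.span {z}) ^ (m + 1) with hWdef
  -- coprimality
  have hWQ : ∀ i, IsCoprime W ((Q i) ^ 2) := by
    intro i
    have h1 : IsCoprime (Ideal.span {z}) (Q i) := by
      rw [Ideal.isCoprime_iff_sup_eq]
      have hlt : Q i < Q i ⊔ Ideal.span {z} :=
        left_lt_sup.mpr (fun hle => hQz i ((Ideal.span_singleton_le_iff_mem _).mp hle))
      have := (hQmax i).1.2 _ hlt
      rwa [sup_comm] at this
    exact h1.pow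
  have hQQ : ∀ i j, i ≠ j → IsCoprime ((Q i) ^ 2) ((Q j) ^ 2) := fun i j hij =>
    (Ideal.isCoprime_iff_sup_eq.mpr (Ideal.IsMaximal.coprime_of_ne (hQmax i) (hQmax j) (hQinj i j hij))).pow
  -- CRT choice of coefficients
  have hc : ∀ (i : Fin q) (k : ℕ), ∃ c : D,
      (c - (g i).coeff k ∈ W) ∧
      (c - (if k = 0 then π i else 0) ∈ (Q i) ^ 2) ∧
      (∀ j, j ≠ i → c - (if k = 0 then 1 else 0) ∈ (Q j) ^ 2) := by
    intro i k
    set I : Option (Fin q) → Ideal D := fun o => o.elim W (fun j => (Q j) ^ 2) with hIdef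
    set x : Option (Fin q) → D := fun o => o.elim ((g i).coeff k)
      (fun j => if j = i then (if k = 0 then π i else 0) else (if k = 0 then 1 else 0)) with hxdef
    have hpair : Pairwise fun o o' => IsCoprime (I o) (I o') := by
      intro o o' hoo'
      match o, o' with
      | none, none => exact absurd rfl hoo'
      | none, some j => exact hWQ j
      | some j, none => exact (hWQ j).symm
      | some j, some j' => exact hQQ j j' (fun h => hoo' (by rw [h]))
    obtain ⟨c, hcrt⟩ := Ideal.exists_forall_sub_mem_ideal hpair x
    refine ⟨c, ?_, ?_, ?_⟩
    · exact hcrt none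
    · have := hcrt (some i)
      simpa [hxdef, hIdef] using this
    · intro j hji
      have := hcrt (some j)
      simpa [hxdef, hIdef, hji] using this
  choose c hc1 hc2 hc3 using hc
  -- the polynomials
  set n : Fin q → ℕ := fun i => (g i).natDegree with hndef
  set r : Fin q → Polynomial D := fun i => ∑ k ∈ Finset.range (n i), C (c i k) * X ^ k with hrdef
  have hr_coeff : ∀ i k, (r i).coeff k = if k < n i then c i k else 0 := by
    intro i k
    rw [hrdef]
    simp only [Polynomial.finset_sum_coeff, Polynomial.coeff_C_mul, Polynomial.coeff_X_pow,
      mul_ite, mul_one, mul_zero]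
    rw [Finset.sum_ite_eq (Finset.range (n i)) k (fun t => c i t)]
    simp [Finset.mem_range]
  have hr_deg : ∀ i, (r i).degree < (n i : WithBot ℕ) := by
    intro i
    rw [Polynomial.degree_lt_iff_coeff_zero]
    intro t ht
    rw [hr_coeff i t, if_neg (by exact_mod_cast not_lt.mpr (by exact_mod_cast ht))]
  set f : Fin q → Polynomial D := fun i => X ^ (n i) + r i with hfdef
  have hfmonic : ∀ i, (f i).Monic := fun i => Polynomial.monic_X_pow_add (hr_deg i)
  have hfdeg : ∀ i, (f i).natDegree = n i := by
    intro i
    have hdeg : (f i).degree = (n i : WithBot ℕ) := by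
      rw [hfdef]
      rw [Polynomial.degree_add_eq_left_of_degree_lt (by rw [Polynomial.degree_X_pow]; exact hr_deg i)]
      exact Polynomial.degree_X_pow (n i)
    exact Polynomial.natDegree_eq_of_degree_eq_some hdeg
  have hfc : ∀ i k, (f i).coeff k =
      (if k = n i then 1 else 0) + (if k < n i then c i k else 0) := by
    intro i k
    rw [hfdef]
    simp only [Polynomial.coeff_add, Polynomial.coeff_X_pow, hr_coeff]
  have hfc_lt : ∀ i k, k < n i → (f i).coeff k = c i k := by
    intro i k hk
    rw [hfc, if_neg (Nat.ne_of_lt hk), if_pos hk, zero_add]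
  have hfc_gt : ∀ i k, n i < k → (f i).coeff k = 0 := by
    intro i k hk
    rw [hfc, if_neg (Nat.ne_of_gt hk), if_neg (by omega), add_zero]
  -- membership facts for the coefficients
  have hmemQ : ∀ i k, k < n i → c i k ∈ Q i := by
    intro i k hk
    have h2 := hc2 i k
    have hQ2le : (Q i) ^ 2 ≤ Q i := Ideal.pow_le_self two_ne_zero
    by_cases hk0 : k = 0
    · rw [if_pos hk0] at h2
      have := hQ2le h2
      have := (Q i).add_mem this (hπ1 i)
      simpa using this
    · rw [if_neg hk0, sub_zero] at h2
      exact hQ2le h2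
  have hnot : ∀ i, c i 0 ∉ (Q i) ^ 2 := by
    intro i hmem
    have h2 := hc2 i 0
    rw [if_pos rfl] at h2
    have : π i ∈ (Q i) ^ 2 := by
      have := ((Q i) ^ 2).sub_mem hmem h2
      simpa using this
    exact hπ2 i this
  -- Eisenstein
  have heis : ∀ i, (f i).IsEisensteinAt (Q i) := by
    intro i
    refine ⟨?_, ?_, ?_⟩
    · rw [(hfmonic i).leadingCoeff]
      exact fun h => (hQmax i).ne_top ((Ideal.eq_top_iff_one _).mpr h)
    · intro k hk
      rw [hfdeg i] at hk
      rw [hfc_lt i k hk]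
      exact hmemQ i k hk
    · rw [hfc_lt i 0 (hnc i)]
      exact hnot i
  have hirr : ∀ i, Irreducible ((f i).map (algebraMap D K)) := by
    intro i
    have h0 : 0 < (f i).natDegree := by rw [hfdeg i]; exact hnc i
    have := (heis i).irreducible (hQmax i).isPrime (hfmonic i).isPrimitive h0
    exact ((hfmonic i).irreducible_iff_irreducible_map_fraction_map (K := K)).mp this
  refine ⟨f, hfmonic, hfdeg, hirr, ?_, ?_⟩
  · -- pairwise non-associated
    intro i j hij hassoc
    have hmapeq : (f i).map (algebraMap D K) = (f j).map (algebraMap D K) :=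
      Polynomial.eq_of_monic_of_associated ((hfmonic i).map _) ((hfmonic j).map _) hassoc
    have hfeq : f i = f j :=
      Polynomial.map_injective _ (IsFractionRing.injective D K) hmapeq
    have hceq : c i 0 = c j 0 := by
      have h1 := hfc_lt i 0 (hnc i)
      have h2 := hfc_lt j 0 (hnc j)
      rw [← h1, ← h2, hfeq]
    have hmem1 : c i 0 ∈ Q i := hmemQ i 0 (hnc i)
    have hmem2 : c j 0 - 1 ∈ Q i := by
      have := hc3 j 0 i hij
      rw [if_pos rfl] at this
      exact Ideal.pow_le_self two_ne_zero this
    have : (1 : D) ∈ Q i := by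
      have := (Q i).sub_mem hmem1 hmem2
      rw [hceq] at this
      simpa using this
    exact (hQmax i).ne_top ((Ideal.eq_top_iff_one _).mpr this)
  · -- congruences
    intro P hP hfin hcard i k
    have hWP : W ≤ P ^ (m + 1) :=
      Ideal.pow_right_mono
        ((Ideal.span_singleton_le_iff_mem _).mpr (hz_small P hP hfin hcard)) (m + 1)
    apply hWP
    rw [Polynomial.coeff_sub]
    rcases lt_trichotomy k (n i) with hk | hk | hk
    · rw [hfc_lt i k hk]
      exact hc1 i k
    · rw [hk, hfc, if_pos rfl, if_neg (lt_irrefl _), add_zero]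
      have : (g i).coeff (n i) = 1 := (hmonic i).coeff_natDegree
      rw [this, sub_self]
      exact W.zero_mem
    · rw [hfc_gt i k hk, Polynomial.coeff_eq_zero_of_natDegree_lt hk, sub_self]
      exact W.zero_mem
end

section
/- Let D be a PID, p prime with residue field of size q, N ≥ 2, and f_1,…,f_q ∈ D[x] monic polynomials, irreducible in K[x], satisfying: v_p(f_i(c)) ≥ N−1 if p | (c−a_i) and i < q; v_p(f_q(c)) ≥ N if p | (c−a_q); v_p(f_i(c)) = 0 if p ∤ (c−a_i); where a_1,…,a_q is a complete residue system mod p. Then for all c ∈ D, v_p(f_1(c)^N ··· f_{q−1}(c)^N · f_q(c)^{N−1}) ≥ N(N−1), so (∏_{i<q} f_i^N) f_q^{N−1} / p^{N(N−1)} ∈ Int(D). -/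
open Polynomial

/-! Every `c` lies in the residue class of some `a_i`. If `i` is the last index, `p^N ∣ f_q(c)`
already gives `p^{N(N-1)} ∣ f_q(c)^{N-1}`; otherwise `p^{N-1} ∣ f_i(c)` gives
`p^{(N-1)N} ∣ (∏_{i<q} f_i(c))^N`. Dividing by the image of `p^{N(N-1)}` in `K` is then harmless. -/

theorem exists_dvd_sub_of_surjective_quotient_mk {R ι : Type*} [CommRing R] {p : R} {a : ι → R}
    (ha : Function.Surjective fun i => Ideal.Quotient.mk (Ideal.span {p}) (a i)) (c : R) :
    ∃ i, p ∣ c - a i := by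
  obtain ⟨i, hi⟩ := ha (Ideal.Quotient.mk _ c)
  exact ⟨i, Ideal.mem_span_singleton.mp (Ideal.Quotient.eq.mp hi.symm)⟩

theorem pow_mul_dvd_pow_of_pow_dvd {M : Type*} [CommMonoid M] {p b : M} {m : ℕ} (n : ℕ)
    (h : p ^ m ∣ b) : p ^ (m * n) ∣ b ^ n :=
  pow_mul p m n ▸ pow_dvd_pow_of_dvd h n

theorem exists_map_eq_inv_mul_map_of_dvd {R K F : Type*} [MonoidWithZero R] [GroupWithZero K]
    [FunLike F R K] [MonoidWithZeroHomClass F R K] (φ : F) {a x : R} (h : a ∣ x) :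
    ∃ d, (φ a)⁻¹ * φ x = φ d := by
  obtain ⟨d, rfl⟩ := h
  by_cases ha : φ a = 0
  · exact ⟨0, by simp [ha]⟩
  · exact ⟨d, by rw [map_mul, inv_mul_cancel_left₀ ha]⟩

theorem stmt16_general (D K : Type*) [CommRing D] [Field K] [Algebra D K] (p : D) (N : ℕ)
    (q : ℕ) (a : Fin (q + 1) → D)
    (ha : Function.Bijective fun i => Ideal.Quotient.mk (Ideal.span {p}) (a i))
    (f : Fin (q + 1) → Polynomial D)
    (h1 : ∀ (i : Fin q) (c : D), p ∣ (c - a i.castSucc) →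
      p ^ (N - 1) ∣ (f i.castSucc).eval c)
    (h2 : ∀ c : D, p ∣ (c - a (Fin.last q)) → p ^ N ∣ (f (Fin.last q)).eval c) :
    (∀ c : D, p ^ (N * (N - 1)) ∣
        (∏ i : Fin q, (f i.castSucc).eval c) ^ N * ((f (Fin.last q)).eval c) ^ (N - 1)) ∧
    (∀ b : D, ∃ d : D,
      (Polynomial.C (((algebraMap D K p) ^ (N * (N - 1)))⁻¹) *
        ((∏ i : Fin q, (f i.castSucc).map (algebraMap D K)) ^ N *
          ((f (Fin.last q)).map (algebraMap D K)) ^ (N - 1))).eval (algebraMap D K b)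
        = algebraMap D K d) := by
  have pow_dvd_value : ∀ c : D, p ^ (N * (N - 1)) ∣
      (∏ i : Fin q, (f i.castSucc).eval c) ^ N * ((f (Fin.last q)).eval c) ^ (N - 1) := by
    intro c
    obtain ⟨i, hi⟩ := exists_dvd_sub_of_surjective_quotient_mk ha.2 c
    cases i using Fin.lastCases with
    | last => exact dvd_mul_of_dvd_right (pow_mul_dvd_pow_of_pow_dvd _ (h2 c hi)) _
    | cast j =>
      have hprod := (h1 j c hi).trans
        (Finset.dvd_prod_of_mem (fun i => (f i.castSucc).eval c) (Finset.mem_univ j))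
      rw [mul_comm N]
      exact dvd_mul_of_dvd_left (pow_mul_dvd_pow_of_pow_dvd _ hprod) _
  refine ⟨pow_dvd_value, fun b => ?_⟩
  simpa [eval_prod, ← map_pow, ← map_prod, ← map_mul,
    aeval_algebraMap_apply_eq_algebraMap_eval] using
    exists_map_eq_inv_mul_map_of_dvd (algebraMap D K) (pow_dvd_value b)

/-- Given a complete residue system `a_1, …, a_{q+1}` mod `p` and monic
polynomials `f_1, …, f_{q+1}`, irreducible in `K[x]`, with `v_p(f_i(c)) ≥ N-1`
whenever `p ∣ c - a_i` (`i ≤ q`), `v_p(f_{q+1}(c)) ≥ N` whenever `p ∣ c - a_{q+1}`,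
and `v_p(f_i(c)) = 0` whenever `p ∤ c - a_i`, one has
`v_p(f_1(c)^N ⋯ f_q(c)^N · f_{q+1}(c)^{N-1}) ≥ N(N-1)` for all `c`, so that
`(∏_{i ≤ q} f_i^N) f_{q+1}^{N-1} / p^{N(N-1)}` is integer-valued. -/
theorem stmt16 (D K : Type*) [CommRing D] [IsDomain D] [IsPrincipalIdealRing D]
    [Field K] [Algebra D K] [IsFractionRing D K]
    (p : D) (hp : Prime p) (N : ℕ) (hN : 2 ≤ N)
    (q : ℕ) (a : Fin (q + 1) → D)
    (ha : Function.Bijective fun i => Ideal.Quotient.mk (Ideal.span {p}) (a i))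
    (f : Fin (q + 1) → Polynomial D)
    (hmonic : ∀ i, (f i).Monic)
    (hirr : ∀ i, Irreducible ((f i).map (algebraMap D K)))
    (h1 : ∀ (i : Fin q) (c : D), p ∣ (c - a i.castSucc) →
      p ^ (N - 1) ∣ (f i.castSucc).eval c)
    (h2 : ∀ c : D, p ∣ (c - a (Fin.last q)) → p ^ N ∣ (f (Fin.last q)).eval c)
    (h3 : ∀ (i : Fin (q + 1)) (c : D), ¬ p ∣ (c - a i) → ¬ p ∣ (f i).eval c) :
    (∀ c : D, p ^ (N * (N - 1)) ∣
        (∏ i : Fin q, (f i.castSucc).eval c) ^ N * ((f (Fin.last q)).eval c) ^ (N - 1)) ∧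
    (∀ b : D, ∃ d : D,
      (Polynomial.C (((algebraMap D K p) ^ (N * (N - 1)))⁻¹) *
        ((∏ i : Fin q, (f i.castSucc).map (algebraMap D K)) ^ N *
          ((f (Fin.last q)).map (algebraMap D K)) ^ (N - 1))).eval (algebraMap D K b)
        = algebraMap D K d) :=
  stmt16_general D K p N q a ha f h1 h2
end

section
/- In Int(ℤ), the polynomial binomial(x,2) = x(x−1)/2 is absolutely irreducible. -/
open Polynomial

/-- The ring `Int(D) = {F ∈ K[x] : F(D) ⊆ D}` of integer-valued polynomials,
as a subring of `K[x]`. -/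
def IntD (D K : Type*) [CommRing D] [Field K] [Algebra D K] : Subring (Polynomial K) where
  carrier := {F | ∀ a : D, ∃ d : D, F.eval (algebraMap D K a) = algebraMap D K d}
  mul_mem' := by
    intro F G hF hG a
    obtain ⟨d, hd⟩ := hF a
    obtain ⟨e, he⟩ := hG a
    exact ⟨d * e, by simp [hd, he]⟩
  one_mem' := fun a => ⟨1, by simp⟩
  add_mem' := by
    intro F G hF hG a
    obtain ⟨d, hd⟩ := hF a
    obtain ⟨e, he⟩ := hG a
    exact ⟨d + e, by simp [hd, he]⟩
  zero_mem' := fun a => ⟨0, by simp⟩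
  neg_mem' := by
    intro F hF a
    obtain ⟨d, hd⟩ := hF a
    exact ⟨-d, by simp [hd]⟩

lemma den_dvd_of_eq_int {c : ℚ} {n : ℕ} {d : ℤ} (h : c * 2 ^ n = (d : ℚ)) :
    ((c.den : ℤ)) ∣ 2 ^ n := by
  have hc : c = Rat.divInt d (2 ^ n) := by
    rw [Rat.divInt_eq_div]
    push_cast
    field_simp
    linarith
  rw [hc]
  exact Rat.den_dvd d (2 ^ n)

lemma den_eq_pow {P : ℚ[X]} (hP : ∀ n : ℤ, ∃ d : ℤ, P.eval (n : ℚ) = (d : ℚ))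
    {c : ℚ} {a b : ℕ} (hPeq : P = C c * X ^ a * (X - 1) ^ b) :
    ∃ e, e ≤ a ∧ e ≤ b ∧ c.den = 2 ^ e := by
  obtain ⟨d₁, hd₁⟩ := hP 2
  obtain ⟨d₂, hd₂⟩ := hP (-1)
  rw [hPeq] at hd₁ hd₂
  simp only [eval_mul, eval_pow, eval_C, eval_X, eval_sub, eval_one] at hd₁ hd₂
  push_cast at hd₁ hd₂
  norm_num at hd₁ hd₂
  -- hd₁ : c * 2 ^ a = d₁ ;  hd₂ : c * (-1) ^ a * (-2) ^ b = d₂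
  have h1 : ((c.den : ℤ)) ∣ 2 ^ a := den_dvd_of_eq_int hd₁
  have hsplit : ((-1 : ℚ)) ^ a * (-2 : ℚ) ^ b = (-1 : ℚ) ^ (a + b) * 2 ^ b := by
    rw [neg_pow (2:ℚ) b, pow_add]
    ring
  have h2 : ((c.den : ℤ)) ∣ 2 ^ b := by
    rcases Nat.even_or_odd (a + b) with hpar | hpar
    · refine den_dvd_of_eq_int (d := d₂) ?_
      rw [mul_assoc, hsplit, hpar.neg_one_pow, one_mul] at hd₂
      exact hd₂
    · refine den_dvd_of_eq_int (d := -d₂) ?_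
      rw [mul_assoc, hsplit, hpar.neg_one_pow] at hd₂
      push_cast
      linarith
  have h1' : c.den ∣ 2 ^ a := by exact_mod_cast h1
  have h2' : c.den ∣ 2 ^ b := by exact_mod_cast h2
  obtain ⟨e, he, hde⟩ := (Nat.dvd_prime_pow Nat.prime_two).mp h1'
  obtain ⟨e', he', hde'⟩ := (Nat.dvd_prime_pow Nat.prime_two).mp h2'
  have : e = e' := Nat.pow_right_injective (le_refl 2) (hde.symm.trans hde')
  exact ⟨e, he, this ▸ he', hde⟩

lemma struct {P : ℚ[X]} {k : ℕ} (h : P ∣ X ^ k * (X - 1) ^ k) :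
    ∃ (c : ℚ) (a b : ℕ), c ≠ 0 ∧ a ≤ k ∧ b ≤ k ∧ P = C c * X ^ a * (X - 1) ^ b := by
  have hX : Prime (X : ℚ[X]) := prime_X
  have hX1 : Prime (X - 1 : ℚ[X]) := by simpa using prime_X_sub_C (1 : ℚ)
  obtain ⟨P₁, P₂, h₁, h₂, rfl⟩ := exists_dvd_and_dvd_of_dvd_mul h
  obtain ⟨a, ha, hassoc₁⟩ := (dvd_prime_pow hX k).mp h₁
  obtain ⟨b, hb, hassoc₂⟩ := (dvd_prime_pow hX1 k).mp h₂
  obtain ⟨u₁, hu₁⟩ := hassoc₁.symm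
  obtain ⟨u₂, hu₂⟩ := hassoc₂.symm
  obtain ⟨r₁, hr₁, hCr₁⟩ := Polynomial.isUnit_iff.mp u₁.isUnit
  obtain ⟨r₂, hr₂, hCr₂⟩ := Polynomial.isUnit_iff.mp u₂.isUnit
  refine ⟨r₁ * r₂, a, b, mul_ne_zero hr₁.ne_zero hr₂.ne_zero, ha, hb, ?_⟩
  rw [← hu₁, ← hu₂, ← hCr₁, ← hCr₂, map_mul]
  ring

lemma key (F G H : IntD ℤ ℚ)
    (hFeq : (F : ℚ[X]) = C ((2 : ℚ)⁻¹) * (X * (X - 1))) (k : ℕ)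
    (h : G * H = F ^ k) : ∃ a ≤ k, Associated G (F ^ a) := by
  -- coerce to ℚ[X]
  have hc : (G : ℚ[X]) * (H : ℚ[X]) = (C ((2:ℚ)⁻¹)) ^ k * (X ^ k * (X - 1) ^ k) := by
    have h' : ((G * H : IntD ℤ ℚ) : ℚ[X]) = ((F ^ k : IntD ℤ ℚ) : ℚ[X]) := by rw [h]
    push_cast at h'
    rw [h', hFeq, mul_pow, mul_pow]
  have h2 : (C ((2:ℚ)⁻¹)) ^ k * (C (2:ℚ)) ^ k = 1 := by
    rw [← mul_pow, ← C_mul]; norm_num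
  have hdvd : (G : ℚ[X]) ∣ X ^ k * (X - 1) ^ k := by
    refine ⟨(H : ℚ[X]) * (C (2:ℚ)) ^ k, ?_⟩
    calc X ^ k * (X - 1) ^ k = (C ((2:ℚ)⁻¹)) ^ k * (C (2:ℚ)) ^ k * (X ^ k * (X - 1) ^ k) := by
          rw [h2, one_mul]
      _ = ((G : ℚ[X]) * (H : ℚ[X])) * (C (2:ℚ)) ^ k := by rw [hc]; ring
      _ = _ := by ring
  obtain ⟨c, a, b, hc0, ha, hb, hGeq⟩ := struct hdvd
  -- the complementary factor
  set c₂ : ℚ := (2:ℚ)⁻¹ ^ k * c⁻¹ with hc₂def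
  have hcc₂ : c * c₂ = (2:ℚ)⁻¹ ^ k := by
    rw [hc₂def, mul_comm ((2:ℚ)⁻¹ ^ k) c⁻¹, ← mul_assoc, mul_inv_cancel₀ hc0, one_mul]
  have hc₂0 : c₂ ≠ 0 := by
    simp [hc₂def]
    positivity
  have hGne : (C c * X ^ a * (X - 1) ^ b : ℚ[X]) ≠ 0 := by
    apply mul_ne_zero (mul_ne_zero _ _)
    · exact pow_ne_zero _ (by simpa using X_sub_C_ne_zero (1 : ℚ))
    · simpa using hc0
    · exact pow_ne_zero _ X_ne_zero
  have hHeq : (H : ℚ[X]) = C c₂ * X ^ (k - a) * (X - 1) ^ (k - b) := by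
    apply mul_left_cancel₀ hGne
    rw [← hGeq, hc]
    calc (C ((2:ℚ)⁻¹)) ^ k * (X ^ k * (X - 1) ^ k)
        = C (c * c₂) * (X ^ (a + (k - a)) * (X - 1) ^ (b + (k - b))) := by
          rw [hcc₂, Nat.add_sub_cancel' ha, Nat.add_sub_cancel' hb, ← C_pow]
      _ = _ := by rw [map_mul, pow_add, pow_add, hGeq]; ring
  -- denominators
  obtain ⟨e₁, he₁a, he₁b, hden₁⟩ := den_eq_pow (fun n => by simpa using G.2 n) hGeq
  obtain ⟨e₂, he₂a, he₂b, hden₂⟩ := den_eq_pow (fun n => by simpa using H.2 n) hHeq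
  -- numerator identity
  have hnum₁ : (c.num : ℚ) = c * (c.den : ℚ) := by
    exact_mod_cast (Rat.mul_den_eq_num c).symm
  have hnum₂ : (c₂.num : ℚ) = c₂ * (c₂.den : ℚ) := by
    exact_mod_cast (Rat.mul_den_eq_num c₂).symm
  have hZ : c.num * c₂.num * 2 ^ k = (2 : ℤ) ^ (e₁ + e₂) := by
    have : ((c.num * c₂.num * 2 ^ k : ℤ) : ℚ) = (((2:ℤ) ^ (e₁ + e₂) : ℤ) : ℚ) := by
      push_cast
      rw [hnum₁, hnum₂, hden₁, hden₂]
      push_cast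
      calc c * 2 ^ e₁ * (c₂ * 2 ^ e₂) * 2 ^ k
          = (c * c₂ * 2 ^ k) * (2 ^ e₁ * 2 ^ e₂) := by ring
        _ = 2 ^ (e₁ + e₂) := by
            rw [hcc₂, ← mul_pow, pow_add]
            norm_num
    exact_mod_cast this
  have hek : e₁ + e₂ ≤ k := by omega
  have hge : (2:ℤ) ^ (e₁ + e₂) ≤ 2 ^ k := pow_le_pow_right₀ (by norm_num) hek
  have hn₁0 : c.num ≠ 0 := Rat.num_ne_zero.mpr hc0
  have hn₂0 : c₂.num ≠ 0 := Rat.num_ne_zero.mpr hc₂0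
  have hpos : 0 < c.num * c₂.num := by
    rcases lt_trichotomy (c.num * c₂.num) 0 with hlt | heq | hgt
    · nlinarith [pow_pos (show (0:ℤ) < 2 by norm_num) k, pow_pos (show (0:ℤ) < 2 by norm_num) (e₁+e₂)]
    · exact absurd heq (mul_ne_zero hn₁0 hn₂0)
    · exact hgt
  have hone : c.num * c₂.num = 1 := by
    by_contra hne
    have h2le : 2 ≤ c.num * c₂.num := by omega
    nlinarith [pow_pos (show (0:ℤ) < 2 by norm_num) k]
  have hkeq : e₁ + e₂ = k := by
    have : (2:ℤ) ^ (e₁ + e₂) = 2 ^ k := by rw [← hZ, hone, one_mul]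
    have := Nat.pow_right_injective (le_refl 2) (by exact_mod_cast this : (2:ℕ)^(e₁+e₂) = 2^k)
    exact this
  have hab : a = b ∧ e₁ = a := by omega
  obtain ⟨rfl, rfl⟩ := hab
  -- c = ± (2⁻¹)^a
  have hceq : c = (c.num : ℚ) * ((2:ℚ)⁻¹) ^ e₁ := by
    rw [hnum₁, hden₁]
    push_cast
    rw [mul_assoc, ← mul_pow]
    norm_num
  have hFpow : (F : ℚ[X]) ^ e₁ = C (((2:ℚ)⁻¹) ^ e₁) * X ^ e₁ * (X - 1) ^ e₁ := by
    rw [hFeq, C_pow, mul_pow, mul_pow]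
    ring
  rcases Int.isUnit_iff.mp (IsUnit.of_mul_eq_one _ hone) with h1 | h1
  · have hGF : G = F ^ e₁ := by
      apply Subtype.ext
      push_cast
      rw [hGeq, hFpow, hceq, h1]
      push_cast
      ring
    exact ⟨e₁, ha, hGF ▸ Associated.refl _⟩
  · have hGF : G = -(F ^ e₁) := by
      apply Subtype.ext
      push_cast
      rw [hGeq, hFpow, hceq, h1]
      push_cast
      rw [neg_mul, C_neg]
      ring
    refine ⟨e₁, ha, ⟨⟨-1, -1, by ring, by ring⟩, ?_⟩⟩
    rw [hGF]
    simp

/-- In `Int(ℤ)`, the binomial polynomial `F = x(x-1)/2` is irreducible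
and in fact absolutely irreducible: every power `F^k` factors uniquely into
irreducibles (Rissner–Windisch). -/
theorem stmt18 (F : IntD ℤ ℚ)
    (hFeq : (F : Polynomial ℚ)
      = Polynomial.C ((2 : ℚ)⁻¹) * (Polynomial.X * (Polynomial.X - 1))) :
    Irreducible F ∧
      ∀ k : ℕ, ∀ s : Multiset (IntD ℤ ℚ), (∀ c ∈ s, Irreducible c) →
        Associated s.prod (F ^ k) → Multiset.Rel Associated s (Multiset.replicate k F) := by
  have hF0 : F ≠ 0 := by
    intro h
    have : (F : ℚ[X]).eval 2 = 1 := by rw [hFeq]; norm_num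
    rw [h] at this
    simp at this
  have hFnu : ¬ IsUnit F := by
    intro hu
    have hu' : IsUnit (F : ℚ[X]) := hu.map (Subring.subtype (IntD ℤ ℚ))
    obtain ⟨r, -, hr⟩ := Polynomial.isUnit_iff.mp hu'
    have h0 := congrArg (eval 0) hr
    have h2 := congrArg (eval 2) hr
    rw [hFeq] at h0 h2
    norm_num at h0 h2
    rw [h0] at h2
    norm_num at h2
  constructor
  · refine ⟨hFnu, fun G H hGH => ?_⟩
    obtain ⟨a, ha, hGa⟩ := key F G H hFeq 1 (by rw [pow_one]; exact hGH.symm)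
    interval_cases a
    · left
      rw [pow_zero] at hGa
      exact associated_one_iff_isUnit.mp hGa
    · right
      rw [pow_one] at hGa
      obtain ⟨w, hw⟩ := hGa
      have hG0 : G ≠ 0 := by
        intro h
        rw [h, zero_mul] at hGH
        exact hF0 hGH
      have : G * H = G * w := by rw [← hGH, hw]
      have := mul_left_cancel₀ hG0 this
      exact this ▸ w.isUnit
  · intro k s
    induction s using Multiset.induction generalizing k with
    | empty =>
      intro _ hassoc
      simp only [Multiset.prod_zero] at hassoc
      have hk : k = 0 := by
        by_contra hk
        exact hFnu (isUnit_of_dvd_unit (dvd_pow_self F hk)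
          (associated_one_iff_isUnit.mp hassoc.symm))
      subst hk
      simp
    | cons G t IH =>
      intro hirr hassoc
      rw [Multiset.prod_cons] at hassoc
      obtain ⟨u, hu⟩ := hassoc
      have hkey : G * (t.prod * ↑u) = F ^ k := by rw [← hu]; ring
      obtain ⟨a, hak, hGa⟩ := key F G _ hFeq k hkey
      have hGirr : Irreducible G := hirr G (Multiset.mem_cons_self G t)
      have ha0 : a ≠ 0 := by
        intro h
        subst h
        rw [pow_zero] at hGa
        exact hGirr.not_isUnit (associated_one_iff_isUnit.mp hGa)
      have ha2 : a < 2 := by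
        by_contra h
        push_neg at h
        have hFa : Irreducible (F ^ a) := hGa.irreducible hGirr
        have hsplit : F ^ a = F * F ^ (a - 1) := by
          rw [← pow_succ']
          congr 1
          omega
        rcases hFa.isUnit_or_isUnit hsplit with hh | hh
        · exact hFnu hh
        · exact hFnu (isUnit_of_dvd_unit (dvd_pow_self F (by omega)) hh)
      have ha1 : a = 1 := by omega
      subst ha1
      rw [pow_one] at hGa
      have hk1 : 1 ≤ k := hak
      obtain ⟨w, hw⟩ := hGa
      have hGF : G = F * ↑w⁻¹ := by
        rw [← hw, mul_assoc, Units.mul_inv, mul_one]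
      have he : ↑w⁻¹ * t.prod * ↑u = F ^ (k - 1) := by
        have hsplit : F ^ k = F * F ^ (k - 1) := by
          rw [← pow_succ']
          congr 1
          omega
        apply mul_left_cancel₀ hF0
        rw [← hsplit, ← hkey, hGF]
        ring
      have htassoc : Associated t.prod (F ^ (k - 1)) := by
        refine ⟨w⁻¹ * u, ?_⟩
        rw [Units.val_mul, ← he]
        ring
      have hrel := IH (k - 1) (fun c hc => hirr c (Multiset.mem_cons_of_mem hc)) htassoc
      have : Multiset.replicate k F = F ::ₘ Multiset.replicate (k - 1) F := by
        rw [← Multiset.replicate_succ]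
        congr 1
        omega
      rw [this]
      exact Multiset.Rel.cons ⟨w, hw⟩ hrel
end
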